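/- Every typable ground g-choreography is well-formed: if Π ⊢ G : ⟨φ,Λ⟩ is derivable for a ground g-choreography G, then ⟦G⟧ ≠ ⊥. -/

import Mathlib

open scoped Classical

namespace Choreo

/-! ## Labels -/

/-- Communication labels: output `A B!m` and input `A B?m`. -/
inductive Label (P M : Type) where
  | out : P → P → M → Label P M
  | inp : P → P → M → Label P M

variable {P M : Type}

/-- The subject of a label: the sender of an output, the receiver of an input. -/
def Label.sbj : Label P M → P
  | .out a _ _ => a
  | .inp _ b _ => b

/-- The set `L^!` of output labels (sender and receiver distinct). -/
def Lout : Set (Label P M) := {l | ∃ a b m, a ≠ b ∧ l = .out a b m}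

/-- The set `L^?` of input labels (sender and receiver distinct). -/
def Lin : Set (Label P M) := {l | ∃ a b m, a ≠ b ∧ l = .inp a b m}

/-- `L̂(A)`: the labels in `L` whose subject is `A`. -/
def hat (L : Set (Label P M)) (A : P) : Set (Label P M) := {l ∈ L | l.sbj = A}

/-- `sbj(L)`: the set of subjects of the labels in `L`. -/
def sbjSet (L : Set (Label P M)) : Set P := Label.sbj '' L

/-- `L − Π`: the labels in `L` whose subject is not in `Π`. -/
def lminus (L : Set (Label P M)) (Γ : Set P) : Set (Label P M) := {l ∈ L | l.sbj ∉ Γ}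

/-! ## Labelled event structures (events drawn from ℕ) -/

/-- Data of a labelled (prime) event structure over events drawn from `ℕ`. -/
structure ES (P M : Type) where
  ev : Set ℕ
  le : ℕ → ℕ → Prop
  conf : ℕ → ℕ → Prop
  lbl : ℕ → Label P M

namespace ES

variable (E : ES P M)

/-- Configurations: downward-closed conflict-free sets of events. -/
def Config (x : Set ℕ) : Prop :=
  x ⊆ E.ev ∧ (∀ e ∈ x, ∀ f ∈ E.ev, E.le f e → f ∈ x) ∧
    ∀ e ∈ x, ∀ f ∈ x, ¬ E.conf e f

/-- `MaxC E`: the ⊆-maximal configurations of `E`. -/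
def MaxC : Set (Set ℕ) := {x | E.Config x ∧ ∀ y, E.Config y → x ⊆ y → y = x}

/-- Minimal events of `s ⊆ E.ev` with respect to `E.le`. -/
def minIn (s : Set ℕ) : Set ℕ := {e ∈ s | ∀ f ∈ s, E.le f e → f = e}

/-- Maximal events of `s ⊆ E.ev` with respect to `E.le`. -/
def maxIn (s : Set ℕ) : Set ℕ := {e ∈ s | ∀ f ∈ s, E.le e f → f = e}

def minEv : Set ℕ := E.minIn E.ev
def maxEv : Set ℕ := E.maxIn E.ev

/-- Labels of the minimal events of `E`. -/
def minLbl : Set (Label P M) := E.lbl '' E.minEv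

/-- Labels of the maximal events of `E`. -/
def maxLbl : Set (Label P M) := E.lbl '' E.maxEv

/-- All labels occurring in `E`. -/
def lblSet : Set (Label P M) := E.lbl '' E.ev

/-- The projection `E↾A`: the restriction of `E` to the events whose label has subject `A`. -/
def proj (A : P) : ES P M where
  ev := {e ∈ E.ev | (E.lbl e).sbj = A}
  le u v := E.le u v ∧ (u ∈ E.ev ∧ (E.lbl u).sbj = A) ∧ (v ∈ E.ev ∧ (E.lbl v).sbj = A)
  conf u v := E.conf u v ∧ (u ∈ E.ev ∧ (E.lbl u).sbj = A) ∧ (v ∈ E.ev ∧ (E.lbl v).sbj = A)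
  lbl := E.lbl

/-- The projection `x↾A` of a configuration (as a set of events of `E`). -/
def projC (x : Set ℕ) (A : P) : Set ℕ := {e ∈ x | (E.lbl e).sbj = A}

end ES

/-! ## Constructions on event structures -/

/-- Tag for the events of a left component. -/
def tagL (e : ℕ) : ℕ := Nat.pair 0 e
/-- Tag for the events of a right component. -/
def tagR (e : ℕ) : ℕ := Nat.pair 1 e
/-- Tag for the events of the copy of the second component indexed by (the code of) a
maximal configuration of the first one. -/
def tagC (k e : ℕ) : ℕ := Nat.pair 1 (Nat.pair k e)

/-- A code (injective on finite sets) of sets of naturals. -/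
noncomputable def encSet (x : Set ℕ) : ℕ :=
  if h : x.Finite then h.toFinset.sum (fun n => 2 ^ n) else 0

/-- The empty event structure `ε`. -/
noncomputable def esEmpty [Nonempty P] [Nonempty M] : ES P M where
  ev := ∅
  le _ _ := False
  conf _ _ := False
  lbl _ := Label.out Classical.ofNonempty Classical.ofNonempty Classical.ofNonempty

/-- `⟦A→B:m⟧`: two ordered events labelled `A B!m < A B?m`. -/
def esAct (a b : P) (m : M) : ES P M where
  ev := {0, 1}
  le u v := (u = 0 ∧ v = 0) ∨ (u = 0 ∧ v = 1) ∨ (u = 1 ∧ v = 1)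
  conf _ _ := False
  lbl e := if e = 0 then Label.out a b m else Label.inp a b m

/-- Tensor product `E1 ⊗ E2` (componentwise disjoint union). -/
def esTensor (E1 E2 : ES P M) : ES P M where
  ev := (tagL '' E1.ev) ∪ (tagR '' E2.ev)
  le u v := (∃ e ∈ E1.ev, ∃ f ∈ E1.ev, E1.le e f ∧ u = tagL e ∧ v = tagL f) ∨
            (∃ e ∈ E2.ev, ∃ f ∈ E2.ev, E2.le e f ∧ u = tagR e ∧ v = tagR f)
  conf u v := (∃ e ∈ E1.ev, ∃ f ∈ E1.ev, E1.conf e f ∧ u = tagL e ∧ v = tagL f) ∨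
              (∃ e ∈ E2.ev, ∃ f ∈ E2.ev, E2.conf e f ∧ u = tagR e ∧ v = tagR f)
  lbl u := if (Nat.unpair u).1 = 0 then E1.lbl (Nat.unpair u).2 else E2.lbl (Nat.unpair u).2

/-- Sum `E1 + E2`: disjoint union with all cross pairs of events in conflict. -/
def esSum (E1 E2 : ES P M) : ES P M :=
  { esTensor E1 E2 with
    conf := fun u v => (esTensor E1 E2).conf u v ∨
      (∃ e ∈ E1.ev, ∃ f ∈ E2.ev, (u = tagL e ∧ v = tagR f) ∨ (u = tagR f ∧ v = tagL e)) }

/-- Sequential composition: appends to each maximal configuration `x` of `E1` a disjoint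
copy of `E2`, ordering an event of `x` below an event of the copy whenever their labels
have the same subject. -/
noncomputable def esSeq (E1 E2 : ES P M) : ES P M where
  ev := (tagL '' E1.ev) ∪ {u | ∃ x ∈ E1.MaxC, ∃ e ∈ E2.ev, u = tagC (encSet x) e}
  le u v :=
    (∃ e ∈ E1.ev, ∃ f ∈ E1.ev, E1.le e f ∧ u = tagL e ∧ v = tagL f) ∨
    (∃ x ∈ E1.MaxC, ∃ e ∈ E2.ev, ∃ f ∈ E2.ev, E2.le e f ∧
       u = tagC (encSet x) e ∧ v = tagC (encSet x) f) ∨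
    (∃ x ∈ E1.MaxC, ∃ e ∈ x, ∃ f ∈ E2.ev, (E1.lbl e).sbj = (E2.lbl f).sbj ∧
       u = tagL e ∧ v = tagC (encSet x) f)
  conf u v :=
    (∃ e ∈ E1.ev, ∃ f ∈ E1.ev, E1.conf e f ∧ u = tagL e ∧ v = tagL f) ∨
    (∃ x ∈ E1.MaxC, ∃ e ∈ E2.ev, ∃ f ∈ E2.ev, E2.conf e f ∧
       u = tagC (encSet x) e ∧ v = tagC (encSet x) f) ∨
    (∃ x ∈ E1.MaxC, ∃ x' ∈ E1.MaxC, x ≠ x' ∧ ∃ e ∈ E2.ev, ∃ f ∈ E2.ev,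
       u = tagC (encSet x) e ∧ v = tagC (encSet x') f) ∨
    (∃ x ∈ E1.MaxC, ∃ e ∈ E1.ev, (∃ e' ∈ x, E1.conf e e') ∧ ∃ f ∈ E2.ev,
       ((u = tagL e ∧ v = tagC (encSet x) f) ∨ (u = tagC (encSet x) f ∧ v = tagL e)))
  lbl u := if (Nat.unpair u).1 = 0 then E1.lbl (Nat.unpair u).2
           else E2.lbl (Nat.unpair (Nat.unpair u).2).2

/-! ## Well-branchedness -/

/-- Labels of the minimal events of the projection `E↾A`. -/
def minLblP (E : ES P M) (A : P) : Set (Label P M) := (E.proj A).minLbl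

/-- `A` is active for the branches `E1`, `E2`. -/
def active (E1 E2 : ES P M) (A : P) : Prop :=
  minLblP E1 A ≠ ∅ ∧ minLblP E2 A ≠ ∅ ∧
  Disjoint (minLblP E1 A) (minLblP E2 A) ∧
  minLblP E1 A ∪ minLblP E2 A ⊆ Lout

/-- `B` is passive for the branches `E1`, `E2`. -/
def passive (E1 E2 : ES P M) (B : P) : Prop :=
  Disjoint (minLblP E1 B) (minLblP E2 B) ∧
  minLblP E1 B ∪ minLblP E2 B ⊆ Lin ∧
  (minLblP E1 B = ∅ ↔ minLblP E2 B = ∅)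

/-- Well-branchedness: a unique active participant, all other participants passive. -/
def wb (E1 E2 : ES P M) : Prop :=
  ∃ A, active E1 E2 A ∧ (∀ A', active E1 E2 A' → A' = A) ∧
    ∀ B, B ≠ A → passive E1 E2 B

/-! ## Ground g-choreographies and their semantics -/

/-- Ground g-choreographies: `G ::= 0 | A→B:m | G;G | G|G | G+G`. -/
inductive GC (P M : Type) where
  | nil : GC P M
  | act : P → P → M → GC P M
  | seq : GC P M → GC P M → GC P M
  | par : GC P M → GC P M → GC P M
  | cho : GC P M → GC P M → GC P M

/-- `P(G)`: the participants occurring in `G`. -/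
def parts : GC P M → Set P
  | .nil => ∅
  | .act a b _ => {a, b}
  | .seq g1 g2 => parts g1 ∪ parts g2
  | .par g1 g2 => parts g1 ∪ parts g2
  | .cho g1 g2 => parts g1 ∪ parts g2

/-- The semantics `⟦G⟧`: a labelled event structure, or `none` (i.e. `⊥`) when a side
condition fails (the grammar requires `A ≠ B` in interactions; parallel requires disjoint
label sets; choice requires well-branchedness). -/
noncomputable def gsem [Nonempty P] [Nonempty M] : GC P M → Option (ES P M)
  | .nil => some esEmpty
  | .act a b m => if a = b then none else some (esAct a b m)
  | .seq g1 g2 =>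
      match gsem g1, gsem g2 with
      | some E1, some E2 => some (esSeq E1 E2)
      | _, _ => none
  | .par g1 g2 =>
      match gsem g1, gsem g2 with
      | some E1, some E2 =>
          if Disjoint E1.lblSet E2.lblSet then some (esTensor E1 E2) else none
      | _, _ => none
  | .cho g1 g2 =>
      match gsem g1, gsem g2 with
      | some E1, some E2 => if wb E1 E2 then some (esSum E1 E2) else none
      | _, _ => none

/-! ## The typing system -/

/-- Output uniform sets of labels. -/
def outUniform (U V : Set (Label P M)) : Prop := Disjoint U V ∧ U ∪ V ⊆ Lout

/-- Input uniform sets of labels. -/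
def inUniform (U V : Set (Label P M)) : Prop := Disjoint U V ∧ U ∪ V ⊆ Lin

/-- The compatibility condition `compch(φ1,φ2,Π)` of rule t-ch. -/
def compch (φ1 φ2 : Set (Label P M)) (Γ : Set P) : Prop :=
  ∃ A ∈ Γ,
    (outUniform (hat φ1 A) (hat φ2 A) ∧ hat φ1 A ≠ ∅ ∧ hat φ2 A ≠ ∅) ∧
    (∀ A' ∈ Γ, (outUniform (hat φ1 A') (hat φ2 A') ∧ hat φ1 A' ≠ ∅ ∧ hat φ2 A' ≠ ∅) →
        A' = A) ∧
    ∀ B ∈ Γ, B ≠ A →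
      inUniform (hat φ1 B) (hat φ2 B) ∧ (hat φ1 B = ∅ ↔ hat φ2 B = ∅)

/-- The typing judgement `Π ⊢ G : ⟨φ,Λ⟩`. -/
inductive Typing : Set P → GC P M → Set (Label P M) → Set (Label P M) → Prop where
  | temp : Typing ∅ GC.nil ∅ ∅
  | tint {a b : P} {m : M} (hab : a ≠ b) :
      Typing {a, b} (GC.act a b m)
        {Label.out a b m, Label.inp a b m} {Label.out a b m, Label.inp a b m}
  | tseq {Γ1 Γ2 : Set P} {g1 g2 : GC P M} {φ1 φ2 Λ1 Λ2 : Set (Label P M)} :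
      Typing Γ1 g1 φ1 Λ1 → Typing Γ2 g2 φ2 Λ2 →
      Typing (Γ1 ∪ Γ2) (GC.seq g1 g2) (φ1 ∪ lminus φ2 Γ1) (Λ2 ∪ lminus Λ1 Γ2)
  | tpar {Γ1 Γ2 : Set P} {g1 g2 : GC P M} {φ1 φ2 Λ1 Λ2 : Set (Label P M)} :
      Typing Γ1 g1 φ1 Λ1 → Typing Γ2 g2 φ2 Λ2 → Γ1 ∩ Γ2 = ∅ →
      Typing (Γ1 ∪ Γ2) (GC.par g1 g2) (φ1 ∪ φ2) (Λ1 ∪ Λ2)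
  | tch {Γ : Set P} {g1 g2 : GC P M} {φ1 φ2 Λ1 Λ2 : Set (Label P M)} :
      Typing Γ g1 φ1 Λ1 → Typing Γ g2 φ2 Λ2 → compch φ1 φ2 Γ →
      Typing Γ (GC.cho g1 g2) (φ1 ∪ φ2) (Λ1 ∪ Λ2)


/-! ## One-hole contexts and their typing (hole axiom `Γh ⊢ [·] : ⟨φh,Λh⟩`) -/

/-- g-choreography contexts with a single hole. -/
inductive Ctx (P M : Type) where
  | hole : Ctx P M
  | seqL : Ctx P M → GC P M → Ctx P M
  | seqR : GC P M → Ctx P M → Ctx P M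
  | parL : Ctx P M → GC P M → Ctx P M
  | parR : GC P M → Ctx P M → Ctx P M
  | choL : Ctx P M → GC P M → Ctx P M
  | choR : GC P M → Ctx P M → Ctx P M

/-- `C.fill g = C[g]`, the replacement of the hole of `C` by `g`. -/
def Ctx.fill : Ctx P M → GC P M → GC P M
  | .hole, g => g
  | .seqL c g2, g => GC.seq (c.fill g) g2
  | .seqR g1 c, g => GC.seq g1 (c.fill g)
  | .parL c g2, g => GC.par (c.fill g) g2
  | .parR g1 c, g => GC.par g1 (c.fill g)
  | .choL c g2, g => GC.cho (c.fill g) g2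
  | .choR g1 c, g => GC.cho g1 (c.fill g)

/-- Typing of one-hole contexts in the type system extended with the axiom
`Γh ⊢ [·] : ⟨φh,Λh⟩` for the hole. -/
inductive CTyping (Γh : Set P) (φh Λh : Set (Label P M)) :
    Set P → Ctx P M → Set (Label P M) → Set (Label P M) → Prop where
  | hole : CTyping Γh φh Λh Γh Ctx.hole φh Λh
  | seqL {Γ1 Γ2 : Set P} {c : Ctx P M} {g : GC P M} {φ1 φ2 Λ1 Λ2 : Set (Label P M)} :
      CTyping Γh φh Λh Γ1 c φ1 Λ1 → Typing Γ2 g φ2 Λ2 →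
      CTyping Γh φh Λh (Γ1 ∪ Γ2) (Ctx.seqL c g) (φ1 ∪ lminus φ2 Γ1) (Λ2 ∪ lminus Λ1 Γ2)
  | seqR {Γ1 Γ2 : Set P} {g : GC P M} {c : Ctx P M} {φ1 φ2 Λ1 Λ2 : Set (Label P M)} :
      Typing Γ1 g φ1 Λ1 → CTyping Γh φh Λh Γ2 c φ2 Λ2 →
      CTyping Γh φh Λh (Γ1 ∪ Γ2) (Ctx.seqR g c) (φ1 ∪ lminus φ2 Γ1) (Λ2 ∪ lminus Λ1 Γ2)
  | parL {Γ1 Γ2 : Set P} {c : Ctx P M} {g : GC P M} {φ1 φ2 Λ1 Λ2 : Set (Label P M)} :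
      CTyping Γh φh Λh Γ1 c φ1 Λ1 → Typing Γ2 g φ2 Λ2 → Γ1 ∩ Γ2 = ∅ →
      CTyping Γh φh Λh (Γ1 ∪ Γ2) (Ctx.parL c g) (φ1 ∪ φ2) (Λ1 ∪ Λ2)
  | parR {Γ1 Γ2 : Set P} {g : GC P M} {c : Ctx P M} {φ1 φ2 Λ1 Λ2 : Set (Label P M)} :
      Typing Γ1 g φ1 Λ1 → CTyping Γh φh Λh Γ2 c φ2 Λ2 → Γ1 ∩ Γ2 = ∅ →
      CTyping Γh φh Λh (Γ1 ∪ Γ2) (Ctx.parR g c) (φ1 ∪ φ2) (Λ1 ∪ Λ2)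
  | choL {Γ : Set P} {c : Ctx P M} {g : GC P M} {φ1 φ2 Λ1 Λ2 : Set (Label P M)} :
      CTyping Γh φh Λh Γ c φ1 Λ1 → Typing Γ g φ2 Λ2 → compch φ1 φ2 Γ →
      CTyping Γh φh Λh Γ (Ctx.choL c g) (φ1 ∪ φ2) (Λ1 ∪ Λ2)
  | choR {Γ : Set P} {g : GC P M} {c : Ctx P M} {φ1 φ2 Λ1 Λ2 : Set (Label P M)} :
      Typing Γ g φ1 Λ1 → CTyping Γh φh Λh Γ c φ2 Λ2 → compch φ1 φ2 Γ →
      CTyping Γh φh Λh Γ (Ctx.choR g c) (φ1 ∪ φ2) (Λ1 ∪ Λ2)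

/-! ## Refinable actions, t-ref, and refinement -/

/-- The three side conditions of the axiom schema t-ref for the refinable action
`A → m1…mn : B1,…,Bn`, represented by the initiator `A` and the nonempty list
`l = [(m1,B1),…,(mn,Bn)]` with pairwise distinct `Bi`. -/
def trefCond (Γ : Set P) (φ Λ : Set (Label P M)) (A : P) (l : List (M × P)) : Prop :=
  l ≠ [] ∧ (l.map Prod.snd).Nodup ∧
  sbjSet φ = Γ ∧ sbjSet Λ = Γ ∧ sbjSet (φ ∩ Lout) = {A} ∧
  ∀ p ∈ l, ∃ C ∈ Γ, hat Λ p.2 = {Label.inp C p.2 p.1}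

/-- `G ref A→m1…mn:B1,…,Bn`: the ground g-choreography `G` refines the refinable action
given by initiator `A` and list `l = [(m1,B1),…,(mn,Bn)]`. -/
def Refines [Nonempty P] [Nonempty M] (G : GC P M) (A : P) (l : List (M × P)) : Prop :=
  ∃ E : ES P M, gsem G = some E ∧
    sbjSet E.minLbl = {A} ∧
    ∀ x ∈ E.MaxC, ∀ p ∈ l, ∃ C ∈ parts G,
      Label.inp C p.2 p.1 ∈ E.lbl '' (E.maxIn (E.projC x p.2))

/-! ## Multi-hole contexts -/

/-- g-choreography contexts with (numbered) holes. -/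
inductive MCtx (P M : Type) where
  | hole : ℕ → MCtx P M
  | nil : MCtx P M
  | act : P → P → M → MCtx P M
  | seq : MCtx P M → MCtx P M → MCtx P M
  | par : MCtx P M → MCtx P M → MCtx P M
  | cho : MCtx P M → MCtx P M → MCtx P M

/-- The (indices of the) holes occurring in a multi-hole context. -/
def MCtx.holes : MCtx P M → List ℕ
  | .hole i => [i]
  | .nil => []
  | .act _ _ _ => []
  | .seq c1 c2 => c1.holes ++ c2.holes
  | .par c1 c2 => c1.holes ++ c2.holes
  | .cho c1 c2 => c1.holes ++ c2.holes

/-- `C.fill g`: replace each hole `[·]i` by `g i`. -/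
def MCtx.fill : MCtx P M → (ℕ → GC P M) → GC P M
  | .hole i, g => g i
  | .nil, _ => GC.nil
  | .act a b m, _ => GC.act a b m
  | .seq c1 c2, g => GC.seq (c1.fill g) (c2.fill g)
  | .par c1 c2, g => GC.par (c1.fill g) (c2.fill g)
  | .cho c1 c2, g => GC.cho (c1.fill g) (c2.fill g)

/-- Typing of multi-hole contexts in the extended type system, where hole `i` is typed by
the axiom `(σ i).1 ⊢ [·]i : ⟨(σ i).2.1, (σ i).2.2⟩`. -/
inductive MTyping (σ : ℕ → Set P × Set (Label P M) × Set (Label P M)) :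
    Set P → MCtx P M → Set (Label P M) → Set (Label P M) → Prop where
  | hole (i : ℕ) : MTyping σ (σ i).1 (MCtx.hole i) (σ i).2.1 (σ i).2.2
  | temp : MTyping σ ∅ MCtx.nil ∅ ∅
  | tint {a b : P} {m : M} (hab : a ≠ b) :
      MTyping σ {a, b} (MCtx.act a b m)
        {Label.out a b m, Label.inp a b m} {Label.out a b m, Label.inp a b m}
  | tseq {Γ1 Γ2 : Set P} {c1 c2 : MCtx P M} {φ1 φ2 Λ1 Λ2 : Set (Label P M)} :
      MTyping σ Γ1 c1 φ1 Λ1 → MTyping σ Γ2 c2 φ2 Λ2 →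
      MTyping σ (Γ1 ∪ Γ2) (MCtx.seq c1 c2) (φ1 ∪ lminus φ2 Γ1) (Λ2 ∪ lminus Λ1 Γ2)
  | tpar {Γ1 Γ2 : Set P} {c1 c2 : MCtx P M} {φ1 φ2 Λ1 Λ2 : Set (Label P M)} :
      MTyping σ Γ1 c1 φ1 Λ1 → MTyping σ Γ2 c2 φ2 Λ2 → Γ1 ∩ Γ2 = ∅ →
      MTyping σ (Γ1 ∪ Γ2) (MCtx.par c1 c2) (φ1 ∪ φ2) (Λ1 ∪ Λ2)
  | tch {Γ : Set P} {c1 c2 : MCtx P M} {φ1 φ2 Λ1 Λ2 : Set (Label P M)} :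
      MTyping σ Γ c1 φ1 Λ1 → MTyping σ Γ c2 φ2 Λ2 → compch φ1 φ2 Γ →
      MTyping σ Γ (MCtx.cho c1 c2) (φ1 ∪ φ2) (Λ1 ∪ Λ2)

/-! Induction on the typing derivation. The semantics of a typed `G` is carried along with an
invariant: it is finite with symmetric conflict, the subjects of its events lie in `Π`, every
maximal configuration contains an event of each participant of `Π`, and the labels of the
minimal events of `⟦G⟧↾A` are exactly `φ̂(A)`. Given the last clause, `compch` of t-ch is
literally well-branchedness of the two branches, and the disjointness of participants in t-par
gives disjoint label sets. The covering clause is what makes `φ` correct for `G1;G2`: every copy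
of `⟦G2⟧` sits above a maximal configuration of `⟦G1⟧`, so a participant of `G1` has its
minimal events in `⟦G1⟧`. -/

section Tags

@[simp] lemma tagL_inj {e f : ℕ} : tagL e = tagL f ↔ e = f := by simp [tagL]
@[simp] lemma tagR_inj {e f : ℕ} : tagR e = tagR f ↔ e = f := by simp [tagR]
@[simp] lemma tagC_inj {k e k' f : ℕ} : tagC k e = tagC k' f ↔ k = k' ∧ e = f := by
  simp [tagC]
@[simp] lemma tagL_ne_tagR (e f : ℕ) : tagL e ≠ tagR f := by simp [tagL, tagR]
@[simp] lemma tagR_ne_tagL (e f : ℕ) : tagR e ≠ tagL f := (tagL_ne_tagR f e).symm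
@[simp] lemma tagL_ne_tagC (e k f : ℕ) : tagL e ≠ tagC k f := by simp [tagL, tagC]
@[simp] lemma tagC_ne_tagL (k f e : ℕ) : tagC k f ≠ tagL e := (tagL_ne_tagC e k f).symm

lemma tagL_injective : Function.Injective tagL := fun _ _ => tagL_inj.1
lemma tagR_injective : Function.Injective tagR := fun _ _ => tagR_inj.1
lemma tagC_injective (k : ℕ) : Function.Injective (tagC k) := fun _ _ h => (tagC_inj.1 h).2

lemma encSet_injOn : Set.InjOn encSet {x | x.Finite} := by
  intro x (hx : x.Finite) y (hy : y.Finite) h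
  rw [encSet, encSet, dif_pos hx, dif_pos hy] at h
  rw [← hx.coe_toFinset, ← hy.coe_toFinset, Finset.geomSum_injective le_rfl h]

end Tags

namespace ES

variable {E : ES P M}

lemma config_empty (E : ES P M) : E.Config ∅ := ⟨Set.empty_subset _, by simp, by simp⟩

lemma Config.union {x y : Set ℕ} (hx : E.Config x) (hy : E.Config y)
    (hxy : ∀ e ∈ x, ∀ f ∈ y, ¬ E.conf e f) (hyx : ∀ e ∈ y, ∀ f ∈ x, ¬ E.conf e f) :
    E.Config (x ∪ y) := by
  refine ⟨Set.union_subset hx.1 hy.1, ?_, ?_⟩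
  · rintro e (he | he) f hf hle
    exacts [Or.inl (hx.2.1 e he f hf hle), Or.inr (hy.2.1 e he f hf hle)]
  · rintro e (he | he) f (hf | hf)
    exacts [hx.2.2 e he f hf, hxy e he f hf, hyx e he f hf, hy.2.2 e he f hf]

lemma eq_of_mem_maxC {x y : Set ℕ} (hx : x ∈ E.MaxC) (hy : E.Config y) (hxy : x ⊆ y) :
    y = x :=
  hx.2 y hy hxy

lemma finite_maxC (hfin : E.ev.Finite) : E.MaxC.Finite :=
  hfin.finite_subsets.subset fun _ hx => hx.1.1

lemma exists_maxC_superset (hfin : E.ev.Finite) {y : Set ℕ} (hy : E.Config y) :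
    ∃ x ∈ E.MaxC, y ⊆ x := by
  have hS : {x | E.Config x ∧ y ⊆ x}.Finite :=
    hfin.finite_subsets.subset fun x hx => hx.1.1
  obtain ⟨x, ⟨hx, hyx⟩, hmax⟩ := hS.exists_maximal ⟨y, hy, le_rfl⟩
  exact ⟨x, ⟨hx, fun z hz hxz => (hmax ⟨hz, hyx.trans hxz⟩ hxz).antisymm hxz⟩, hyx⟩

lemma maxC_nonempty (hfin : E.ev.Finite) : E.MaxC.Nonempty :=
  let ⟨x, hx, _⟩ := exists_maxC_superset hfin (config_empty E); ⟨x, hx⟩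

structure IsEmbedding (t : ℕ → ℕ) (E' E : ES P M) : Prop where
  mem_ev : ∀ e, t e ∈ E.ev ↔ e ∈ E'.ev
  le : ∀ e ∈ E'.ev, ∀ f ∈ E'.ev, E'.le e f → E.le (t e) (t f)
  conf : ∀ e ∈ E'.ev, ∀ f ∈ E'.ev, E'.conf e f → E.conf (t e) (t f)
  lbl : ∀ e, E.lbl (t e) = E'.lbl e

variable {E' : ES P M} {t : ℕ → ℕ} {z : Set ℕ}

lemma IsEmbedding.config_preimage (ht : IsEmbedding t E' E) (hz : E.Config z) :
    E'.Config (t ⁻¹' z) := by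
  have hsub : t ⁻¹' z ⊆ E'.ev := fun e he => (ht.mem_ev e).1 (hz.1 he)
  refine ⟨hsub, fun e he f hf hle => ?_, fun e he f hf hc => ?_⟩
  · exact hz.2.1 _ he _ ((ht.mem_ev f).2 hf) (ht.le f hf e (hsub he) hle)
  · exact hz.2.2 _ he _ hf (ht.conf e (hsub he) f (hsub hf) hc)

lemma IsEmbedding.preimage_mem_maxC (ht : IsEmbedding t E' E) (hz : z ∈ E.MaxC)
    (hext : ∀ y, E'.Config y → t ⁻¹' z ⊆ y → ∃ w, E.Config w ∧ z ⊆ w ∧ t '' y ⊆ w) :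
    t ⁻¹' z ∈ E'.MaxC := by
  refine ⟨ht.config_preimage hz.1, fun y hy hzy => hzy.antisymm' ?_⟩
  obtain ⟨w, hw, hzw, hyw⟩ := hext y hy hzy
  rw [← Set.image_subset_iff, ← eq_of_mem_maxC hz hw hzw]
  exact hyw

end ES

lemma mem_minLblP {E : ES P M} {A : P} {l : Label P M} :
    l ∈ minLblP E A ↔ ∃ e ∈ E.ev, (E.lbl e).sbj = A ∧ E.lbl e = l ∧
      ∀ f ∈ E.ev, (E.lbl f).sbj = A → E.le f e → f = e := by
  constructor
  · rintro ⟨e, ⟨⟨he, hA⟩, hmin⟩, rfl⟩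
    exact ⟨e, he, hA, rfl, fun f hf hfA hle => hmin f ⟨hf, hfA⟩ ⟨hle, ⟨hf, hfA⟩, he, hA⟩⟩
  · rintro ⟨e, he, hA, rfl, hmin⟩
    exact ⟨e, ⟨⟨he, hA⟩, fun f hf hle => hmin f hf.1 hf.2 hle.1⟩, rfl⟩

lemma minLblP_eq_empty {E : ES P M} {A : P} (h : ∀ e ∈ E.ev, (E.lbl e).sbj ≠ A) :
    minLblP E A = ∅ :=
  Set.eq_empty_of_forall_notMem fun _ hl =>
    let ⟨e, he, hA, _⟩ := mem_minLblP.1 hl; h e he hA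

structure ES.Covers (E : ES P M) (Γ : Set P) : Prop where
  finite : E.ev.Finite
  conf_symm : ∀ ⦃u v⦄, E.conf u v → E.conf v u
  sbj_mem : ∀ e ∈ E.ev, (E.lbl e).sbj ∈ Γ
  maxC : ∀ x ∈ E.MaxC, ∀ A ∈ Γ, ∃ e ∈ x, (E.lbl e).sbj = A

lemma ES.Covers.sbj_ne {E : ES P M} {Γ : Set P} (h : E.Covers Γ) {A : P} (hA : A ∉ Γ) :
    ∀ e ∈ E.ev, (E.lbl e).sbj ≠ A :=
  fun e he hs => hA (hs ▸ h.sbj_mem e he)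

lemma ES.Covers.minLblP_eq_empty {E : ES P M} {Γ : Set P} (h : E.Covers Γ) {A : P}
    (hA : A ∉ Γ) : minLblP E A = ∅ :=
  Choreo.minLblP_eq_empty (h.sbj_ne hA)

section Atoms

lemma covers_esEmpty [Nonempty P] [Nonempty M] : (esEmpty : ES P M).Covers ∅ :=
  ⟨Set.finite_empty, fun _ _ h => h, fun _ he => he.elim, fun _ _ _ hA => hA.elim⟩

lemma minLblP_esEmpty [Nonempty P] [Nonempty M] (A : P) :
    minLblP (esEmpty : ES P M) A = ∅ :=
  minLblP_eq_empty fun _ he => he.elim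

variable {a b : P} {m : M}

@[simp] lemma esAct_lbl_zero : (esAct a b m).lbl 0 = .out a b m := rfl
@[simp] lemma esAct_lbl_one : (esAct a b m).lbl 1 = .inp a b m := rfl

lemma maxC_esAct {x : Set ℕ} (hx : x ∈ (esAct a b m).MaxC) : x = {0, 1} :=
  (ES.eq_of_mem_maxC hx ⟨subset_rfl, fun _ _ _ hf _ => hf, fun _ _ _ _ h => h⟩ hx.1.1).symm

lemma covers_esAct : (esAct a b m).Covers {a, b} := by
  refine ⟨(Set.finite_singleton 1).insert 0, fun _ _ h => h, ?_, ?_⟩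
  · rintro e (rfl | rfl) <;> simp [Label.sbj]
  · intro x hx A hA
    rw [maxC_esAct hx]
    rcases hA with rfl | rfl
    exacts [⟨0, Or.inl rfl, rfl⟩, ⟨1, Or.inr rfl, rfl⟩]

lemma minLblP_esAct (hab : a ≠ b) (A : P) :
    minLblP (esAct a b m) A = hat {.out a b m, .inp a b m} A := by
  ext l
  simp only [mem_minLblP, hat, Set.mem_ofPred_eq]
  constructor
  · rintro ⟨e, he, hA, rfl, -⟩
    rcases he with rfl | rfl <;> simp_all
  · rintro ⟨hl | hl, rfl⟩ <;> subst hl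
    · refine ⟨0, Or.inl rfl, rfl, rfl, ?_⟩
      rintro f (rfl | rfl) hf -
      · rfl
      · exact absurd hf.symm hab
    · refine ⟨1, Or.inr rfl, rfl, rfl, ?_⟩
      rintro f (rfl | rfl) hf -
      · exact absurd hf hab
      · rfl

end Atoms

section TensorSum

open ES

variable {E1 E2 : ES P M} {Γ Γ1 Γ2 : Set P} {x1 x2 z : Set ℕ}

@[simp] lemma tagL_mem_esTensor_ev {e : ℕ} : tagL e ∈ (esTensor E1 E2).ev ↔ e ∈ E1.ev := by
  simp [esTensor]

@[simp] lemma tagR_mem_esTensor_ev {e : ℕ} : tagR e ∈ (esTensor E1 E2).ev ↔ e ∈ E2.ev := by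
  simp [esTensor]

lemma isEmbedding_tagL_esTensor : IsEmbedding tagL E1 (esTensor E1 E2) :=
  ⟨fun _ => tagL_mem_esTensor_ev, fun e he f hf hle => Or.inl ⟨e, he, f, hf, hle, rfl, rfl⟩,
    fun e he f hf hc => Or.inl ⟨e, he, f, hf, hc, rfl, rfl⟩,
    fun e => by simp [esTensor, tagL]⟩

lemma isEmbedding_tagR_esTensor : IsEmbedding tagR E2 (esTensor E1 E2) :=
  ⟨fun _ => tagR_mem_esTensor_ev, fun e he f hf hle => Or.inr ⟨e, he, f, hf, hle, rfl, rfl⟩,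
    fun e he f hf hc => Or.inr ⟨e, he, f, hf, hc, rfl, rfl⟩,
    fun e => by simp [esTensor, tagR]⟩

lemma ES.IsEmbedding.esSum {t : ℕ → ℕ} {E' : ES P M} (ht : IsEmbedding t E' (esTensor E1 E2)) :
    IsEmbedding t E' (esSum E1 E2) :=
  ⟨ht.mem_ev, ht.le, fun e he f hf hc => Or.inl (ht.conf e he f hf hc), ht.lbl⟩

lemma eq_image_tagL_union_image_tagR (hz : z ⊆ (esTensor E1 E2).ev) :
    z = tagL '' (tagL ⁻¹' z) ∪ tagR '' (tagR ⁻¹' z) := by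
  refine (Set.union_subset (Set.image_preimage_subset _ _)
    (Set.image_preimage_subset _ _)).antisymm' fun u hu => ?_
  rcases hz hu with ⟨e, -, rfl⟩ | ⟨e, -, rfl⟩
  exacts [Or.inl ⟨e, hu, rfl⟩, Or.inr ⟨e, hu, rfl⟩]

lemma config_esTensor (h1 : E1.Config x1) (h2 : E2.Config x2) :
    (esTensor E1 E2).Config (tagL '' x1 ∪ tagR '' x2) := by
  refine ⟨?_, ?_, ?_⟩
  · rintro _ (⟨e, he, rfl⟩ | ⟨e, he, rfl⟩)
    exacts [tagL_mem_esTensor_ev.2 (h1.1 he), tagR_mem_esTensor_ev.2 (h2.1 he)]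
  · rintro u hu v - (⟨e, he, f, hf, hle, rfl, rfl⟩ | ⟨e, he, f, hf, hle, rfl, rfl⟩) <;>
      simp only [Set.mem_union, Set.mem_image, tagL_inj, tagR_inj, tagL_ne_tagR,
        tagR_ne_tagL, exists_eq_right, and_false, exists_false, or_false, false_or] at hu ⊢
    exacts [h1.2.1 f hu e he hle, h2.2.1 f hu e he hle]
  · rintro u hu v hv (⟨e, he, f, hf, hc, rfl, rfl⟩ | ⟨e, he, f, hf, hc, rfl, rfl⟩) <;>
      simp only [Set.mem_union, Set.mem_image, tagL_inj, tagR_inj, tagL_ne_tagR,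
        tagR_ne_tagL, exists_eq_right, and_false, exists_false, or_false, false_or] at hu hv
    exacts [h1.2.2 e hu f hv hc, h2.2.2 e hu f hv hc]

lemma mem_maxC_esTensor (hz : z ∈ (esTensor E1 E2).MaxC) :
    tagL ⁻¹' z ∈ E1.MaxC ∧ tagR ⁻¹' z ∈ E2.MaxC := by
  have hzeq := eq_image_tagL_union_image_tagR hz.1.1
  have hL := isEmbedding_tagL_esTensor.config_preimage hz.1
  have hR := isEmbedding_tagR_esTensor.config_preimage hz.1
  constructor
  · refine isEmbedding_tagL_esTensor.preimage_mem_maxC hz fun y hy hzy => ?_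
    refine ⟨_, config_esTensor hy hR, ?_, Set.subset_union_left⟩
    exact hzeq.trans_subset (Set.union_subset_union_left _ (Set.image_mono hzy))
  · refine isEmbedding_tagR_esTensor.preimage_mem_maxC hz fun y hy hzy => ?_
    refine ⟨_, config_esTensor hL hy, ?_, Set.subset_union_right⟩
    exact hzeq.trans_subset (Set.union_subset_union_right _ (Set.image_mono hzy))

lemma config_esSum_of_esTensor (hz : (esTensor E1 E2).Config z)
    (hmix : ∀ e f, tagL e ∈ z → tagR f ∉ z) : (esSum E1 E2).Config z := by
  refine ⟨hz.1, hz.2.1, ?_⟩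
  rintro u hu v hv (hc | ⟨e, -, f, -, ⟨rfl, rfl⟩ | ⟨rfl, rfl⟩⟩)
  exacts [hz.2.2 u hu v hv hc, hmix e f hu hv, hmix e f hv hu]

lemma mem_maxC_esSum (hz : z ∈ (esSum E1 E2).MaxC) :
    tagL ⁻¹' z ∈ E1.MaxC ∨ tagR ⁻¹' z ∈ E2.MaxC := by
  have hzeq := eq_image_tagL_union_image_tagR hz.1.1
  by_cases hR : ∃ f, tagR f ∈ z
  · obtain ⟨f, hf⟩ := hR
    have hL : tagL ⁻¹' z = ∅ := Set.eq_empty_of_forall_notMem fun e he =>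
      hz.1.2.2 _ he _ hf (Or.inr ⟨e, tagL_mem_esTensor_ev.1 (hz.1.1 he),
        f, tagR_mem_esTensor_ev.1 (hz.1.1 hf), Or.inl ⟨rfl, rfl⟩⟩)
    refine Or.inr (isEmbedding_tagR_esTensor.esSum.preimage_mem_maxC hz fun y hy hzy => ?_)
    refine ⟨tagR '' y, ?_, ?_, subset_rfl⟩
    · simpa using config_esSum_of_esTensor (config_esTensor (config_empty E1) hy) (by simp)
    · rw [hL, Set.image_empty, Set.empty_union] at hzeq
      exact hzeq.trans_subset (Set.image_mono hzy)
  · have hR : tagR ⁻¹' z = ∅ := Set.eq_empty_of_forall_notMem fun f hf => hR ⟨f, hf⟩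
    refine Or.inl (isEmbedding_tagL_esTensor.esSum.preimage_mem_maxC hz fun y hy hzy => ?_)
    refine ⟨tagL '' y, ?_, ?_, subset_rfl⟩
    · simpa using config_esSum_of_esTensor (config_esTensor hy (config_empty E2)) (by simp)
    · rw [hR, Set.image_empty, Set.union_empty] at hzeq
      exact hzeq.trans_subset (Set.image_mono hzy)

lemma minLblP_esTensor (A : P) :
    minLblP (esTensor E1 E2) A = minLblP E1 A ∪ minLblP E2 A := by
  have hL := isEmbedding_tagL_esTensor (E1 := E1) (E2 := E2)
  have hR := isEmbedding_tagR_esTensor (E1 := E1) (E2 := E2)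
  ext l
  simp only [mem_minLblP, Set.mem_union]
  constructor
  · rintro ⟨_, ⟨e, he, rfl⟩ | ⟨e, he, rfl⟩, hA, rfl, hmin⟩
    · refine Or.inl ⟨e, he, by rwa [← hL.lbl], (hL.lbl e).symm, fun f hf hfA hle => ?_⟩
      exact tagL_injective (hmin _ ((hL.mem_ev f).2 hf) (by rwa [hL.lbl]) (hL.le f hf e he hle))
    · refine Or.inr ⟨e, he, by rwa [← hR.lbl], (hR.lbl e).symm, fun f hf hfA hle => ?_⟩
      exact tagR_injective (hmin _ ((hR.mem_ev f).2 hf) (by rwa [hR.lbl]) (hR.le f hf e he hle))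
  · rintro (⟨e, he, hA, rfl, hmin⟩ | ⟨e, he, hA, rfl, hmin⟩)
    · refine ⟨tagL e, (hL.mem_ev e).2 he, by rwa [hL.lbl], hL.lbl e, ?_⟩
      rintro u - huA (⟨f, hf, e', -, hle, rfl, h⟩ | ⟨_, _, _, _, _, _, h⟩)
      · obtain rfl := tagL_injective h
        rw [hmin f hf (by rwa [← hL.lbl]) hle]
      · simp at h
    · refine ⟨tagR e, (hR.mem_ev e).2 he, by rwa [hR.lbl], hR.lbl e, ?_⟩
      rintro u - huA (⟨_, _, _, _, _, _, h⟩ | ⟨f, hf, e', -, hle, rfl, h⟩)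
      · simp at h
      · obtain rfl := tagR_injective h
        rw [hmin f hf (by rwa [← hR.lbl]) hle]

lemma ES.Covers.esTensor (h1 : E1.Covers Γ1) (h2 : E2.Covers Γ2) :
    (esTensor E1 E2).Covers (Γ1 ∪ Γ2) := by
  have hL := isEmbedding_tagL_esTensor (E1 := E1) (E2 := E2)
  have hR := isEmbedding_tagR_esTensor (E1 := E1) (E2 := E2)
  refine ⟨(h1.finite.image tagL).union (h2.finite.image tagR), ?_, ?_, ?_⟩
  · rintro _ _ (⟨e, he, f, hf, hc, rfl, rfl⟩ | ⟨e, he, f, hf, hc, rfl, rfl⟩)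
    exacts [hL.conf f hf e he (h1.conf_symm hc), hR.conf f hf e he (h2.conf_symm hc)]
  · rintro _ (⟨e, he, rfl⟩ | ⟨e, he, rfl⟩)
    exacts [Or.inl (hL.lbl e ▸ h1.sbj_mem e he), Or.inr (hR.lbl e ▸ h2.sbj_mem e he)]
  · intro z hz A hA
    obtain ⟨hz1, hz2⟩ := mem_maxC_esTensor hz
    rcases hA with hA | hA
    · obtain ⟨e, he, hsbj⟩ := h1.maxC _ hz1 A hA
      exact ⟨tagL e, he, by rwa [hL.lbl]⟩
    · obtain ⟨e, he, hsbj⟩ := h2.maxC _ hz2 A hA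
      exact ⟨tagR e, he, by rwa [hR.lbl]⟩

lemma ES.Covers.esSum (h1 : E1.Covers Γ) (h2 : E2.Covers Γ) :
    (esSum E1 E2).Covers Γ := by
  have hL := (isEmbedding_tagL_esTensor (E1 := E1) (E2 := E2)).esSum
  have hR := (isEmbedding_tagR_esTensor (E1 := E1) (E2 := E2)).esSum
  have ht := h1.esTensor h2
  rw [Set.union_self] at ht
  refine ⟨ht.finite, ?_, ht.sbj_mem, ?_⟩
  · rintro u v (hc | ⟨e, he, f, hf, ⟨rfl, rfl⟩ | ⟨rfl, rfl⟩⟩)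
    exacts [Or.inl (ht.conf_symm hc), Or.inr ⟨e, he, f, hf, Or.inr ⟨rfl, rfl⟩⟩,
      Or.inr ⟨e, he, f, hf, Or.inl ⟨rfl, rfl⟩⟩]
  · intro z hz A hA
    rcases mem_maxC_esSum hz with hz1 | hz2
    · obtain ⟨e, he, hsbj⟩ := h1.maxC _ hz1 A hA
      exact ⟨tagL e, he, by rwa [hL.lbl]⟩
    · obtain ⟨e, he, hsbj⟩ := h2.maxC _ hz2 A hA
      exact ⟨tagR e, he, by rwa [hR.lbl]⟩

end TensorSum

section Seq

open ES

variable {E1 E2 : ES P M} {Γ1 Γ2 : Set P} {x y z : Set ℕ}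

lemma injOn_encSet_maxC {E : ES P M} (hfin : E.ev.Finite) : Set.InjOn encSet E.MaxC :=
  encSet_injOn.mono fun _ hx => hfin.subset hx.1.1

@[simp] lemma tagL_mem_esSeq_ev {e : ℕ} : tagL e ∈ (esSeq E1 E2).ev ↔ e ∈ E1.ev := by
  simp [esSeq]

@[simp] lemma tagC_mem_esSeq_ev {k f : ℕ} :
    tagC k f ∈ (esSeq E1 E2).ev ↔ ∃ x ∈ E1.MaxC, f ∈ E2.ev ∧ k = encSet x := by
  simp [esSeq]

@[simp] lemma esSeq_lbl_tagC (k f : ℕ) : (esSeq E1 E2).lbl (tagC k f) = E2.lbl f := by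
  simp [esSeq, tagC]

lemma isEmbedding_tagL_esSeq : IsEmbedding tagL E1 (esSeq E1 E2) :=
  ⟨fun _ => tagL_mem_esSeq_ev, fun e he f hf hle => Or.inl ⟨e, he, f, hf, hle, rfl, rfl⟩,
    fun e he f hf hc => Or.inl ⟨e, he, f, hf, hc, rfl, rfl⟩, fun e => by simp [esSeq, tagL]⟩

lemma isEmbedding_tagC_esSeq (hx : x ∈ E1.MaxC) :
    IsEmbedding (tagC (encSet x)) E2 (esSeq E1 E2) :=
  ⟨fun _ => tagC_mem_esSeq_ev.trans
    ⟨fun ⟨_, _, hf, _⟩ => hf, fun hf => ⟨x, hx, hf, rfl⟩⟩,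
    fun e he f hf hle => Or.inr (Or.inl ⟨x, hx, e, he, f, hf, hle, rfl, rfl⟩),
    fun e he f hf hc => Or.inr (Or.inl ⟨x, hx, e, he, f, hf, hc, rfl, rfl⟩),
    esSeq_lbl_tagC _⟩

lemma esSeq_ev_finite (hfin1 : E1.ev.Finite) (hfin2 : E2.ev.Finite) :
    (esSeq E1 E2).ev.Finite := by
  refine (hfin1.image tagL).union
    (((finite_maxC hfin1).image2 (fun x e => tagC (encSet x) e) hfin2).subset ?_)
  rintro _ ⟨x, hx, e, he, rfl⟩
  exact ⟨x, hx, e, he, rfl⟩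

lemma config_esSeq (hfin1 : E1.ev.Finite) (hx : x ∈ E1.MaxC) (hy : E2.Config y) :
    (esSeq E1 E2).Config (tagL '' x ∪ tagC (encSet x) '' y) := by
  have hinj := injOn_encSet_maxC hfin1
  refine ⟨?_, ?_, ?_⟩
  · rintro _ (⟨e, he, rfl⟩ | ⟨f, hf, rfl⟩)
    exacts [Or.inl ⟨e, hx.1.1 he, rfl⟩, Or.inr ⟨x, hx, f, hy.1 hf, rfl⟩]
  · rintro u hu v - (⟨e, he, f, hf, hle, rfl, rfl⟩ | ⟨x', hx', e, he, f, hf, hle, rfl, rfl⟩ |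
      ⟨x', hx', e, he, f, hf, -, rfl, rfl⟩) <;> simp at hu ⊢
    · exact hx.1.2.1 f hu e he hle
    · exact ⟨hy.2.1 f hu.1 e he hle, hu.2⟩
    · rwa [hinj hx hx' hu.2]
  · rintro u hu v hv (⟨e, he, f, hf, hc, rfl, rfl⟩ | ⟨x', hx', e, he, f, hf, hc, rfl, rfl⟩ |
      ⟨x', hx', x'', hx'', hne, e, he, f, hf, rfl, rfl⟩ |
      ⟨x', hx', e, he, ⟨e', he', hc⟩, f, hf, ⟨rfl, rfl⟩ | ⟨rfl, rfl⟩⟩) <;> simp at hu hv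
    · exact hx.1.2.2 e hu f hv hc
    · exact hy.2.2 e hu.1 f hv.1 hc
    · exact hne ((hinj hx hx' hu.2).symm.trans (hinj hx hx'' hv.2))
    · rw [← hinj hx hx' hv.2] at he'
      exact hx.1.2.2 e hu e' he' hc
    · rw [← hinj hx hx' hu.2] at he'
      exact hx.1.2.2 e hv e' he' hc

lemma exists_maxC_of_config_esSeq (hfin1 : E1.ev.Finite)
    (hsymm : ∀ ⦃u v⦄, E1.conf u v → E1.conf v u) (hz : (esSeq E1 E2).Config z) :
    ∃ x ∈ E1.MaxC, tagL ⁻¹' z ⊆ x ∧ ∀ k f, tagC k f ∈ z → k = encSet x := by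
  have hL := isEmbedding_tagL_esSeq.config_preimage hz
  by_cases hC : ∃ k f, tagC k f ∈ z
  · obtain ⟨_, f₀, hf₀⟩ := hC
    obtain ⟨x, hx, hf₀', rfl⟩ := tagC_mem_esSeq_ev.1 (hz.1 hf₀)
    -- an event of `E1` in conflict with `x` is in conflict with the whole copy attached to `x`
    have hconf : ∀ e ∈ tagL ⁻¹' z, ∀ e' ∈ x, ¬ E1.conf e e' := fun e he e' he' hc =>
      hz.2.2 _ he _ hf₀ (Or.inr (Or.inr (Or.inr
        ⟨x, hx, e, hL.1 he, ⟨e', he', hc⟩, f₀, hf₀', Or.inl ⟨rfl, rfl⟩⟩)))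
    have hunion : E1.Config (tagL ⁻¹' z ∪ x) :=
      hL.union hx.1 hconf fun e' he' e he hc => hconf e he e' he' (hsymm hc)
    refine ⟨x, hx, Set.subset_union_left.trans (eq_of_mem_maxC hx hunion Set.subset_union_right).le,
      fun k f hf => ?_⟩
    obtain ⟨x', hx', hf', rfl⟩ := tagC_mem_esSeq_ev.1 (hz.1 hf)
    by_contra hne
    exact hz.2.2 _ hf _ hf₀ (Or.inr (Or.inr (Or.inl
      ⟨x', hx', x, hx, fun h => hne (congrArg encSet h), f, hf', f₀, hf₀', rfl, rfl⟩)))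
  · obtain ⟨x, hx, hsub⟩ := exists_maxC_superset hfin1 hL
    exact ⟨x, hx, hsub, fun k f hf => (hC ⟨k, f, hf⟩).elim⟩

lemma mem_maxC_esSeq (hfin1 : E1.ev.Finite) (hfin2 : E2.ev.Finite)
    (hsymm : ∀ ⦃u v⦄, E1.conf u v → E1.conf v u) (hz : z ∈ (esSeq E1 E2).MaxC) :
    ∃ x ∈ E1.MaxC, ∃ y ∈ E2.MaxC, z = tagL '' x ∪ tagC (encSet x) '' y := by
  obtain ⟨x, hx, hzx, hidx⟩ := exists_maxC_of_config_esSeq hfin1 hsymm hz.1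
  obtain ⟨y, hy, hzy⟩ :=
    exists_maxC_superset hfin2 ((isEmbedding_tagC_esSeq hx).config_preimage hz.1)
  refine ⟨x, hx, y, hy, (eq_of_mem_maxC hz (config_esSeq hfin1 hx hy.1) ?_).symm⟩
  intro u hu
  rcases hz.1.1 hu with ⟨e, -, rfl⟩ | ⟨_, -, f, -, rfl⟩
  · exact Or.inl ⟨e, hzx hu, rfl⟩
  · have hk := hidx _ _ hu
    rw [hk] at hu ⊢
    exact Or.inr ⟨f, hzy hu, rfl⟩

lemma minLblP_esSeq_of_covered {A : P}
    (hcov : ∀ x ∈ E1.MaxC, ∃ e ∈ x, (E1.lbl e).sbj = A) :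
    minLblP (esSeq E1 E2) A = minLblP E1 A := by
  have hL := isEmbedding_tagL_esSeq (E1 := E1) (E2 := E2)
  ext l
  simp only [mem_minLblP]
  constructor
  · rintro ⟨_, ⟨e, he, rfl⟩ | ⟨x, hx, f, hf, rfl⟩, hA, rfl, hmin⟩
    · refine ⟨e, he, by rwa [← hL.lbl], (hL.lbl e).symm, fun f hf hfA hle => ?_⟩
      exact tagL_injective (hmin _ ((hL.mem_ev f).2 hf) (by rwa [hL.lbl]) (hL.le f hf e he hle))
    · obtain ⟨e, hex, heA⟩ := hcov x hx
      rw [esSeq_lbl_tagC] at hA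
      exact absurd (hmin (tagL e) ((hL.mem_ev e).2 (hx.1.1 hex)) (by rwa [hL.lbl])
        (Or.inr (Or.inr ⟨x, hx, e, hex, f, hf, heA.trans hA.symm, rfl, rfl⟩))) (by simp)
  · rintro ⟨e, he, hA, rfl, hmin⟩
    refine ⟨tagL e, (hL.mem_ev e).2 he, by rwa [hL.lbl], hL.lbl e, ?_⟩
    rintro u - huA (⟨f, hf, e', -, hle, rfl, h⟩ | ⟨_, _, _, _, _, _, _, _, h⟩ |
      ⟨_, _, _, _, _, _, _, _, h⟩)
    · obtain rfl := tagL_injective h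
      rw [hmin f hf (by rwa [← hL.lbl]) hle]
    all_goals simp at h

lemma minLblP_esSeq_of_not_mem (hfin1 : E1.ev.Finite) {A : P}
    (hA : ∀ e ∈ E1.ev, (E1.lbl e).sbj ≠ A) :
    minLblP (esSeq E1 E2) A = minLblP E2 A := by
  ext l
  simp only [mem_minLblP]
  constructor
  · rintro ⟨_, ⟨e, he, rfl⟩ | ⟨x, hx, f, hf, rfl⟩, hfA, rfl, hmin⟩
    · exact absurd hfA (isEmbedding_tagL_esSeq.lbl e ▸ hA e he)
    have hC := isEmbedding_tagC_esSeq (E2 := E2) hx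
    refine ⟨f, hf, by rwa [← hC.lbl], (hC.lbl f).symm, fun f' hf' hfA' hle => ?_⟩
    exact tagC_injective _ (hmin _ ((hC.mem_ev f').2 hf') (by rwa [hC.lbl]) (hC.le f' hf' f hf hle))
  · rintro ⟨f, hf, hfA, rfl, hmin⟩
    obtain ⟨x, hx⟩ := maxC_nonempty hfin1
    have hC := isEmbedding_tagC_esSeq (E2 := E2) hx
    refine ⟨tagC (encSet x) f, (hC.mem_ev f).2 hf, by rwa [hC.lbl], hC.lbl f, ?_⟩
    rintro u - huA (⟨_, _, _, _, _, _, h⟩ | ⟨x', hx', f', hf', _, _, hle, rfl, h⟩ |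
      ⟨x', hx', e, he, _, _, _, rfl, _⟩)
    · simp at h
    · obtain ⟨hk, rfl⟩ := tagC_inj.1 h
      rw [esSeq_lbl_tagC] at huA
      rw [hmin f' hf' huA hle, hk]
    · exact absurd huA (isEmbedding_tagL_esSeq.lbl e ▸ hA e (hx'.1.1 he))

lemma ES.Covers.esSeq (h1 : E1.Covers Γ1) (h2 : E2.Covers Γ2) :
    (esSeq E1 E2).Covers (Γ1 ∪ Γ2) := by
  have hL := isEmbedding_tagL_esSeq (E1 := E1) (E2 := E2)
  refine ⟨esSeq_ev_finite h1.finite h2.finite, ?_, ?_, ?_⟩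
  · rintro u v (⟨e, he, f, hf, hc, rfl, rfl⟩ | ⟨x, hx, e, he, f, hf, hc, rfl, rfl⟩ |
      ⟨x, hx, x', hx', hne, e, he, f, hf, rfl, rfl⟩ |
      ⟨x, hx, e, he, hce, f, hf, ⟨rfl, rfl⟩ | ⟨rfl, rfl⟩⟩)
    · exact Or.inl ⟨f, hf, e, he, h1.conf_symm hc, rfl, rfl⟩
    · exact Or.inr (Or.inl ⟨x, hx, f, hf, e, he, h2.conf_symm hc, rfl, rfl⟩)
    · exact Or.inr (Or.inr (Or.inl ⟨x', hx', x, hx, hne.symm, f, hf, e, he, rfl, rfl⟩))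
    · exact Or.inr (Or.inr (Or.inr ⟨x, hx, e, he, hce, f, hf, Or.inr ⟨rfl, rfl⟩⟩))
    · exact Or.inr (Or.inr (Or.inr ⟨x, hx, e, he, hce, f, hf, Or.inl ⟨rfl, rfl⟩⟩))
  · rintro _ (⟨e, he, rfl⟩ | ⟨x, -, f, hf, rfl⟩)
    · exact Or.inl (hL.lbl e ▸ h1.sbj_mem e he)
    · exact Or.inr ((esSeq_lbl_tagC _ f).symm ▸ h2.sbj_mem f hf)
  · intro z hz A hA
    obtain ⟨x, hx, y, hy, rfl⟩ := mem_maxC_esSeq h1.finite h2.finite h1.conf_symm hz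
    rcases hA with hA | hA
    · obtain ⟨e, he, heA⟩ := h1.maxC x hx A hA
      exact ⟨tagL e, Or.inl ⟨e, he, rfl⟩, by rwa [hL.lbl]⟩
    · obtain ⟨f, hf, hfA⟩ := h2.maxC y hy A hA
      exact ⟨tagC (encSet x) f, Or.inr ⟨f, hf, rfl⟩, by rwa [esSeq_lbl_tagC]⟩

end Seq

section Typing

variable {E1 E2 : ES P M} {Γ Γ1 Γ2 : Set P} {φ1 φ2 : Set (Label P M)}

lemma hat_union (U V : Set (Label P M)) (A : P) : hat (U ∪ V) A = hat U A ∪ hat V A :=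
  Set.sep_union

lemma hat_lminus_of_mem {φ : Set (Label P M)} {A : P} (hA : A ∈ Γ) :
    hat (lminus φ Γ) A = ∅ :=
  Set.eq_empty_of_forall_notMem fun _ ⟨⟨_, hn⟩, hs⟩ => hn (hs ▸ hA)

lemma hat_lminus_of_not_mem {φ : Set (Label P M)} {A : P} (hA : A ∉ Γ) :
    hat (lminus φ Γ) A = hat φ A := by
  ext l
  exact ⟨fun ⟨⟨hl, _⟩, hs⟩ => ⟨hl, hs⟩, fun ⟨hl, hs⟩ => ⟨⟨hl, hs ▸ hA⟩, hs⟩⟩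

lemma ES.Covers.disjoint_lblSet (h1 : E1.Covers Γ1) (h2 : E2.Covers Γ2)
    (hΓ : Γ1 ∩ Γ2 = ∅) : Disjoint E1.lblSet E2.lblSet := by
  rw [Set.disjoint_left]
  rintro _ ⟨e, he, rfl⟩ ⟨f, hf, hfe⟩
  have hmem : (E1.lbl e).sbj ∈ Γ1 ∩ Γ2 := ⟨h1.sbj_mem e he, hfe ▸ h2.sbj_mem f hf⟩
  rwa [hΓ] at hmem

lemma wb_of_compch (h1 : E1.Covers Γ) (h2 : E2.Covers Γ)
    (hφ1 : ∀ A, minLblP E1 A = hat φ1 A) (hφ2 : ∀ A, minLblP E2 A = hat φ2 A)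
    (hc : compch φ1 φ2 Γ) : wb E1 E2 := by
  obtain ⟨A, -, ⟨⟨hdisj, hout⟩, hne1, hne2⟩, huniq, hpass⟩ := hc
  have hempty : ∀ B ∉ Γ, hat φ1 B = ∅ ∧ hat φ2 B = ∅ := fun B hB =>
    ⟨hφ1 B ▸ h1.minLblP_eq_empty hB, hφ2 B ▸ h2.minLblP_eq_empty hB⟩
  refine ⟨A, ?_, fun A' hA' => ?_, fun B hBA => ?_⟩
  · rw [active, hφ1, hφ2]
    exact ⟨hne1, hne2, hdisj, hout⟩
  · rw [active, hφ1, hφ2] at hA'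
    obtain ⟨hne1', hne2', hdisj', hout'⟩ := hA'
    have hA'Γ : A' ∈ Γ := by_contra fun hn => hne1' (hempty A' hn).1
    exact huniq A' hA'Γ ⟨⟨hdisj', hout'⟩, hne1', hne2'⟩
  · rw [passive, hφ1, hφ2]
    by_cases hB : B ∈ Γ
    · obtain ⟨⟨hd, hs⟩, hiff⟩ := hpass B hB hBA
      exact ⟨hd, hs, hiff⟩
    · rw [(hempty B hB).1, (hempty B hB).2]
      simp

theorem exists_gsem_of_typing [Nonempty P] [Nonempty M] {G : GC P M}
    {φ Λ : Set (Label P M)} (h : Typing Γ G φ Λ) :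
    ∃ E, gsem G = some E ∧ E.Covers Γ ∧ ∀ A, minLblP E A = hat φ A := by
  induction h with
  | temp =>
    exact ⟨esEmpty, rfl, covers_esEmpty, fun A => (minLblP_esEmpty A).trans (by simp [hat])⟩
  | @tint a b m hab =>
    exact ⟨esAct a b m, by simp [gsem, hab], covers_esAct, minLblP_esAct hab⟩
  | @tseq Γ1 Γ2 _ _ φ1 φ2 _ _ _ _ ih1 ih2 =>
    obtain ⟨E1, hg1, h1, hφ1⟩ := ih1
    obtain ⟨E2, hg2, h2, hφ2⟩ := ih2
    refine ⟨esSeq E1 E2, by simp [gsem, hg1, hg2], h1.esSeq h2, fun A => ?_⟩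
    rw [hat_union]
    by_cases hA : A ∈ Γ1
    · rw [hat_lminus_of_mem hA, Set.union_empty, ← hφ1,
        minLblP_esSeq_of_covered fun x hx => h1.maxC x hx A hA]
    · rw [hat_lminus_of_not_mem hA, ← hφ1, ← hφ2, h1.minLblP_eq_empty hA, Set.empty_union,
        minLblP_esSeq_of_not_mem h1.finite (h1.sbj_ne hA)]
  | tpar _ _ hΓ ih1 ih2 =>
    obtain ⟨E1, hg1, h1, hφ1⟩ := ih1
    obtain ⟨E2, hg2, h2, hφ2⟩ := ih2
    refine ⟨esTensor E1 E2, by simp [gsem, hg1, hg2, h1.disjoint_lblSet h2 hΓ],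
      h1.esTensor h2, fun A => ?_⟩
    rw [hat_union, ← hφ1, ← hφ2, minLblP_esTensor]
  | tch _ _ hc ih1 ih2 =>
    obtain ⟨E1, hg1, h1, hφ1⟩ := ih1
    obtain ⟨E2, hg2, h2, hφ2⟩ := ih2
    refine ⟨esSum E1 E2, by simp [gsem, hg1, hg2, wb_of_compch h1 h2 hφ1 hφ2 hc],
      h1.esSum h2, fun A => ?_⟩
    rw [hat_union, ← hφ1, ← hφ2]
    -- `esSum` differs from `esTensor` only in its conflicts
    exact minLblP_esTensor A

end Typing

/-- Every typable ground g-choreography is well-formed: if `Π ⊢ G : ⟨φ,Λ⟩` is derivable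
then `⟦G⟧ ≠ ⊥`. -/
theorem typable_well_formed {P M : Type} [Infinite P] [Infinite M]
    {Γ : Set P} {G : GC P M} {φ Λ : Set (Label P M)}
    (h : Typing Γ G φ Λ) :
    gsem G ≠ none := by
  obtain ⟨E, hE, -⟩ := exists_gsem_of_typing h
  simp [hE]

end Choreo
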